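/- arXiv:0809.0232 — 6 statements merged into one kernel-verified Lean document; each statement's English description precedes it below -/
import Mathlib

section
/- The first derivative of f(t) = Σ_{r=1}^{2} α_r Q_r'(t) log(Q_r(t)/Q_s(t)) equals 2·Σ_{l=1}^2 α_l log(Q_l(t)/Q_s(t)) + α_1 α_2 (Q_1'(t) Q_2(t) − Q_2'(t) Q_1(t))^2 / (Q_s(t) Q_1(t) Q_2(t)), where Q_s = α_1 Q_1 + α_2 Q_2. -/
/-!
Differentiating termwise, `f' = 2 Σ α_r log (Q_r/Q_s) + Σ α_r Q_r' (Q_r'/Q_r − Q_s'/Q_s)`,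
since `Q_r'' = 2`. Because `Q_s` is the `α`-mixture of `Q₁` and `Q₂`, the second sum is a
two-point variance, which collapses to `α₁ α₂ (Q₁' Q₂ − Q₂' Q₁)² / (Q_s Q₁ Q₂)`.
-/

open Real

theorem quadratic_pos_of_sq_lt {ξ η : ℝ} (h : ξ ^ 2 < η) (t : ℝ) :
    0 < t ^ 2 + 2 * t * ξ + η := by
  nlinarith [sq_nonneg (t + ξ)]

theorem hasDerivAt_quadratic (ξ η t : ℝ) :
    HasDerivAt (fun s => s ^ 2 + 2 * s * ξ + η) (2 * (t + ξ)) t := by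
  refine (((hasDerivAt_pow 2 t).add (((hasDerivAt_id t).const_mul 2).mul_const ξ)).add_const
    η).congr_deriv ?_
  norm_num
  ring

theorem hasDerivAt_log_div {Q P : ℝ → ℝ} {q p x : ℝ} (hQ : HasDerivAt Q q x)
    (hP : HasDerivAt P p x) (hQx : Q x ≠ 0) (hPx : P x ≠ 0) :
    HasDerivAt (fun y => log (Q y / P y)) (q / Q x - p / P x) x := by
  refine ((hQ.div hP hPx).log (div_ne_zero hQx hPx)).congr_deriv ?_
  simp only [Pi.div_apply]
  field_simp

theorem two_point_variance_identity {a₁ a₂ q₁ q₂ d₁ d₂ : ℝ} (hq₁ : q₁ ≠ 0) (hq₂ : q₂ ≠ 0)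
    (hqs : a₁ * q₁ + a₂ * q₂ ≠ 0) :
    a₁ * d₁ * (d₁ / q₁ - (a₁ * d₁ + a₂ * d₂) / (a₁ * q₁ + a₂ * q₂))
      + a₂ * d₂ * (d₂ / q₂ - (a₁ * d₁ + a₂ * d₂) / (a₁ * q₁ + a₂ * q₂))
      = a₁ * a₂ * (d₁ * q₂ - d₂ * q₁) ^ 2 / ((a₁ * q₁ + a₂ * q₂) * q₁ * q₂) := by
  field_simp
  ring

theorem stmt_2_general (α₁ α₂ ξ₁ ξ₂ η₁ η₂ : ℝ)
    (hα₁ : α₁ ∈ Set.Ioo (0 : ℝ) 1) (hα₂ : α₂ ∈ Set.Ioo (0 : ℝ) 1)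
    (h₁ : ξ₁ ^ 2 < η₁) (h₂ : ξ₂ ^ 2 < η₂)
    (Q₁ Q₂ Qs f : ℝ → ℝ)
    (hQ₁ : ∀ t, Q₁ t = t ^ 2 + 2 * t * ξ₁ + η₁)
    (hQ₂ : ∀ t, Q₂ t = t ^ 2 + 2 * t * ξ₂ + η₂)
    (hQs : ∀ t, Qs t = α₁ * Q₁ t + α₂ * Q₂ t)
    (hf : ∀ t, f t = α₁ * (2 * (t + ξ₁)) * Real.log (Q₁ t / Qs t)
        + α₂ * (2 * (t + ξ₂)) * Real.log (Q₂ t / Qs t)) (t : ℝ) :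
    HasDerivAt f
      (2 * (α₁ * Real.log (Q₁ t / Qs t) + α₂ * Real.log (Q₂ t / Qs t))
        + α₁ * α₂ * (2 * (t + ξ₁) * Q₂ t - 2 * (t + ξ₂) * Q₁ t) ^ 2
            / (Qs t * Q₁ t * Q₂ t)) t := by
  have hQ₁t : 0 < Q₁ t := hQ₁ t ▸ quadratic_pos_of_sq_lt h₁ t
  have hQ₂t : 0 < Q₂ t := hQ₂ t ▸ quadratic_pos_of_sq_lt h₂ t
  have hQst : 0 < Qs t := hQs t ▸ by positivity [hα₁.1, hα₂.1]
  have hD₁ : HasDerivAt Q₁ (2 * (t + ξ₁)) t := funext hQ₁ ▸ hasDerivAt_quadratic ξ₁ η₁ t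
  have hD₂ : HasDerivAt Q₂ (2 * (t + ξ₂)) t := funext hQ₂ ▸ hasDerivAt_quadratic ξ₂ η₂ t
  have hDs : HasDerivAt Qs (α₁ * (2 * (t + ξ₁)) + α₂ * (2 * (t + ξ₂))) t :=
    funext hQs ▸ (hD₁.const_mul α₁).add (hD₂.const_mul α₂)
  have hlin (α ξ : ℝ) : HasDerivAt (fun s => α * (2 * (s + ξ))) (α * (2 * 1)) t :=
    (((hasDerivAt_id t).add_const ξ).const_mul 2).const_mul α
  rw [funext hf]
  refine (((hlin α₁ ξ₁).mul (hasDerivAt_log_div hD₁ hDs hQ₁t.ne' hQst.ne')).add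
    ((hlin α₂ ξ₂).mul (hasDerivAt_log_div hD₂ hDs hQ₂t.ne' hQst.ne'))).congr_deriv ?_
  rw [hQs t] at hQst ⊢
  rw [← two_point_variance_identity hQ₁t.ne' hQ₂t.ne' hQst.ne']
  ring

/-- The first derivative of `f(t) = Σ_r α_r Q_r'(t) log (Q_r(t)/Q_s(t))` equals
`2 Σ_l α_l log (Q_l(t)/Q_s(t)) + α₁ α₂ (Q₁' Q₂ − Q₂' Q₁)^2 / (Q_s Q₁ Q₂)`,
where `Q_s = α₁ Q₁ + α₂ Q₂`. -/
theorem stmt_2 (α₁ α₂ ξ₁ ξ₂ η₁ η₂ : ℝ)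
    (hα₁ : α₁ ∈ Set.Ioo (0 : ℝ) 1) (hα₂ : α₂ ∈ Set.Ioo (0 : ℝ) 1) (hsum : α₁ + α₂ = 1)
    (h₁ : ξ₁ ^ 2 < η₁) (h₂ : ξ₂ ^ 2 < η₂)
    (Q₁ Q₂ Qs f : ℝ → ℝ)
    (hQ₁ : ∀ t, Q₁ t = t ^ 2 + 2 * t * ξ₁ + η₁)
    (hQ₂ : ∀ t, Q₂ t = t ^ 2 + 2 * t * ξ₂ + η₂)
    (hQs : ∀ t, Qs t = α₁ * Q₁ t + α₂ * Q₂ t)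
    (hf : ∀ t, f t = α₁ * (2 * (t + ξ₁)) * Real.log (Q₁ t / Qs t)
        + α₂ * (2 * (t + ξ₂)) * Real.log (Q₂ t / Qs t)) (t : ℝ) :
    HasDerivAt f
      (2 * (α₁ * Real.log (Q₁ t / Qs t) + α₂ * Real.log (Q₂ t / Qs t))
        + α₁ * α₂ * (2 * (t + ξ₁) * Q₂ t - 2 * (t + ξ₂) * Q₁ t) ^ 2
            / (Qs t * Q₁ t * Q₂ t)) t :=
  stmt_2_general α₁ α₂ ξ₁ ξ₂ η₁ η₂ hα₁ hα₂ h₁ h₂ Q₁ Q₂ Qs f hQ₁ hQ₂ hQs hf t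
end

section
/- The second derivative of f satisfies f''(t) = α_1 α_2 · L(t) · P(t) / (Q_1(t) Q_2(t) Q_s(t))^2, where L = Q_1' Q_2 − Q_2' Q_1, Q_s = α_1 Q_1 + α_2 Q_2, and P = 3 L' Q_1 Q_2 Q_s − (Q_1 Q_2 Q_s)' L. -/
/-!
Since `α₁ + α₂ = 1`, the mixture `Q_s` is again a monic quadratic, with coefficients the
`α`-averages of those of `Q₁` and `Q₂`. So `f` is a combination of two terms `Q' log (Q / S)`
with `Q`, `S` positive monic quadratics, so that `Q'' = S'' = 2` and `Q''' = 0`.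
Differentiating such a term twice gives `4 (Q'/Q - S'/S) + Q' ((2Q - Q'²)/Q² - (2S - S'²)/S²)`,
and the claim becomes a rational identity in `t + ξᵣ` and `Qᵣ(t)`.
-/

open Real

def monicQuad (ξ η t : ℝ) : ℝ := t ^ 2 + 2 * t * ξ + η

noncomputable def logRatioTerm (ξ η ζ θ t : ℝ) : ℝ := 2 * (t + ξ) * log (monicQuad ξ η t / monicQuad ζ θ t)

section MonicQuad

variable {ξ η ζ θ t : ℝ}

lemma monicQuad_pos (h : ξ ^ 2 < η) (t : ℝ) : 0 < monicQuad ξ η t := by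
  unfold monicQuad
  nlinarith [sq_nonneg (t + ξ)]

lemma convex_combination_monicQuad {α₁ α₂ : ℝ} (h : α₁ + α₂ = 1) (ξ₁ η₁ ξ₂ η₂ t : ℝ) :
    α₁ * monicQuad ξ₁ η₁ t + α₂ * monicQuad ξ₂ η₂ t
      = monicQuad (α₁ * ξ₁ + α₂ * ξ₂) (α₁ * η₁ + α₂ * η₂) t := by
  unfold monicQuad
  linear_combination t ^ 2 * h

lemma hasDerivAt_monicQuad (ξ η t : ℝ) : HasDerivAt (monicQuad ξ η) (2 * (t + ξ)) t := by
  have h := ((hasDerivAt_pow 2 t).add (((hasDerivAt_id' t).const_mul 2).mul_const ξ)).add_const η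
  exact h.congr_deriv (by simp only [Nat.cast_ofNat]; ring)

lemma hasDerivAt_wronskian_monicQuad (ξ₁ η₁ ξ₂ η₂ t : ℝ) :
    HasDerivAt (fun s => 2 * (s + ξ₁) * monicQuad ξ₂ η₂ s - 2 * (s + ξ₂) * monicQuad ξ₁ η₁ s)
      (2 * (monicQuad ξ₂ η₂ t - monicQuad ξ₁ η₁ t)) t := by
  have h := ((((hasDerivAt_id' t).add_const ξ₁).const_mul 2).mul (hasDerivAt_monicQuad ξ₂ η₂ t)).sub
    ((((hasDerivAt_id' t).add_const ξ₂).const_mul 2).mul (hasDerivAt_monicQuad ξ₁ η₁ t))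
  exact h.congr_deriv (by ring)

lemma hasDerivAt_monicQuad_mul_mul (ξ₁ η₁ ξ₂ η₂ ξ₃ η₃ t : ℝ) :
    HasDerivAt (fun s => monicQuad ξ₁ η₁ s * monicQuad ξ₂ η₂ s * monicQuad ξ₃ η₃ s)
      (2 * (t + ξ₁) * monicQuad ξ₂ η₂ t * monicQuad ξ₃ η₃ t
        + monicQuad ξ₁ η₁ t * (2 * (t + ξ₂)) * monicQuad ξ₃ η₃ t
        + monicQuad ξ₁ η₁ t * monicQuad ξ₂ η₂ t * (2 * (t + ξ₃))) t :=
  (((hasDerivAt_monicQuad ξ₁ η₁ t).mul (hasDerivAt_monicQuad ξ₂ η₂ t)).mul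
    (hasDerivAt_monicQuad ξ₃ η₃ t)).congr_deriv (by simp only [Pi.mul_apply]; ring)

lemma hasDerivAt_div_monicQuad (hq : monicQuad ξ η t ≠ 0) :
    HasDerivAt (fun s => 2 * (s + ξ) / monicQuad ξ η s)
      ((2 * monicQuad ξ η t - (2 * (t + ξ)) ^ 2) / monicQuad ξ η t ^ 2) t := by
  have h := (((hasDerivAt_id' t).add_const ξ).const_mul 2).div (hasDerivAt_monicQuad ξ η t) hq
  exact h.congr_deriv (by ring)

lemma hasDerivAt_log_div_monicQuad (hq : monicQuad ξ η t ≠ 0) (hs : monicQuad ζ θ t ≠ 0) :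
    HasDerivAt (fun s => log (monicQuad ξ η s / monicQuad ζ θ s))
      (2 * (t + ξ) / monicQuad ξ η t - 2 * (t + ζ) / monicQuad ζ θ t) t := by
  have h := ((hasDerivAt_monicQuad ξ η t).div (hasDerivAt_monicQuad ζ θ t) hs).log
    (div_ne_zero hq hs)
  exact h.congr_deriv (by simp only [Pi.div_apply]; field_simp)

lemma hasDerivAt_logRatioTerm (hq : monicQuad ξ η t ≠ 0) (hs : monicQuad ζ θ t ≠ 0) :
    HasDerivAt (logRatioTerm ξ η ζ θ)
      (2 * log (monicQuad ξ η t / monicQuad ζ θ t)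
        + 2 * (t + ξ) * (2 * (t + ξ) / monicQuad ξ η t - 2 * (t + ζ) / monicQuad ζ θ t)) t := by
  have h := (((hasDerivAt_id' t).add_const ξ).const_mul 2).mul (hasDerivAt_log_div_monicQuad hq hs)
  exact h.congr_deriv (by ring)

lemma hasDerivAt_deriv_logRatioTerm (hq : ∀ s, monicQuad ξ η s ≠ 0)
    (hs : ∀ s, monicQuad ζ θ s ≠ 0) (t : ℝ) :
    HasDerivAt (deriv (logRatioTerm ξ η ζ θ))
      (4 * (2 * (t + ξ) / monicQuad ξ η t - 2 * (t + ζ) / monicQuad ζ θ t)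
        + 2 * (t + ξ) * ((2 * monicQuad ξ η t - (2 * (t + ξ)) ^ 2) / monicQuad ξ η t ^ 2
          - (2 * monicQuad ζ θ t - (2 * (t + ζ)) ^ 2) / monicQuad ζ θ t ^ 2)) t := by
  rw [funext fun s => (hasDerivAt_logRatioTerm (hq s) (hs s)).deriv]
  have h := ((hasDerivAt_log_div_monicQuad (hq t) (hs t)).const_mul 2).add
    ((((hasDerivAt_id' t).add_const ξ).const_mul 2).mul
      ((hasDerivAt_div_monicQuad (hq t)).sub (hasDerivAt_div_monicQuad (hs t))))
  exact h.congr_deriv (by simp only [Pi.sub_apply]; ring)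

end MonicQuad

/-- Applied with `a = t + ξ₁`, `b = t + ξ₂`, `c = t + ζ`, `A = Q₁ t`, `B = Q₂ t`,
`S = Q_s t`. -/
lemma mixture_identity {α₁ α₂ a b c A B S : ℝ} (hsum : α₁ + α₂ = 1) (hA : A ≠ 0) (hB : B ≠ 0)
    (hS₀ : S ≠ 0) (hS : S = α₁ * A + α₂ * B) (hc : c = α₁ * a + α₂ * b) :
    α₁ * (4 * (2 * a / A - 2 * c / S)
        + 2 * a * ((2 * A - (2 * a) ^ 2) / A ^ 2 - (2 * S - (2 * c) ^ 2) / S ^ 2))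
      + α₂ * (4 * (2 * b / B - 2 * c / S)
        + 2 * b * ((2 * B - (2 * b) ^ 2) / B ^ 2 - (2 * S - (2 * c) ^ 2) / S ^ 2))
    = α₁ * α₂ * (2 * a * B - 2 * b * A)
        * (3 * (2 * (B - A)) * (A * B * S)
          - (2 * a * B * S + A * (2 * b) * S + A * B * (2 * c)) * (2 * a * B - 2 * b * A))
        / (A * B * S) ^ 2 := by
  obtain rfl : α₂ = 1 - α₁ := by linarith
  subst hc
  field_simp
  subst hS
  ring

/-- The second derivative of `f` satisfies
`f''(t) = α₁ α₂ L(t) P(t) / (Q₁(t) Q₂(t) Q_s(t))^2`, where `L = Q₁' Q₂ − Q₂' Q₁`,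
`Q_s = α₁ Q₁ + α₂ Q₂`, and `P = 3 L' Q₁ Q₂ Q_s − (Q₁ Q₂ Q_s)' L`. -/
theorem stmt_3 (α₁ α₂ ξ₁ ξ₂ η₁ η₂ : ℝ)
    (hα₁ : α₁ ∈ Set.Ioo (0 : ℝ) 1) (hα₂ : α₂ ∈ Set.Ioo (0 : ℝ) 1) (hsum : α₁ + α₂ = 1)
    (h₁ : ξ₁ ^ 2 < η₁) (h₂ : ξ₂ ^ 2 < η₂)
    (Q₁ Q₂ Qs L P f : ℝ → ℝ)
    (hQ₁ : ∀ t, Q₁ t = t ^ 2 + 2 * t * ξ₁ + η₁)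
    (hQ₂ : ∀ t, Q₂ t = t ^ 2 + 2 * t * ξ₂ + η₂)
    (hQs : ∀ t, Qs t = α₁ * Q₁ t + α₂ * Q₂ t)
    (hL : ∀ t, L t = 2 * (t + ξ₁) * Q₂ t - 2 * (t + ξ₂) * Q₁ t)
    (hP : ∀ t, P t = 3 * deriv L t * (Q₁ t * Q₂ t * Qs t)
        - deriv (fun s => Q₁ s * Q₂ s * Qs s) t * L t)
    (hf : ∀ t, f t = α₁ * (2 * (t + ξ₁)) * Real.log (Q₁ t / Qs t)
        + α₂ * (2 * (t + ξ₂)) * Real.log (Q₂ t / Qs t)) (t : ℝ) :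
    deriv (deriv f) t = α₁ * α₂ * L t * P t / (Q₁ t * Q₂ t * Qs t) ^ 2 := by
  set ζ := α₁ * ξ₁ + α₂ * ξ₂
  set θ := α₁ * η₁ + α₂ * η₂
  have hmix := convex_combination_monicQuad hsum ξ₁ η₁ ξ₂ η₂
  obtain rfl : Q₁ = monicQuad ξ₁ η₁ := funext hQ₁
  obtain rfl : Q₂ = monicQuad ξ₂ η₂ := funext hQ₂
  obtain rfl : Qs = monicQuad ζ θ := funext fun s => (hQs s).trans (hmix s)
  obtain rfl : L = fun s => 2 * (s + ξ₁) * monicQuad ξ₂ η₂ s - 2 * (s + ξ₂) * monicQuad ξ₁ η₁ s :=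
    funext hL
  have hq₁ (s : ℝ) : monicQuad ξ₁ η₁ s ≠ 0 := (monicQuad_pos h₁ s).ne'
  have hq₂ (s : ℝ) : monicQuad ξ₂ η₂ s ≠ 0 := (monicQuad_pos h₂ s).ne'
  have hqs (s : ℝ) : monicQuad ζ θ s ≠ 0 := by
    rw [← hmix]
    exact (add_pos (mul_pos hα₁.1 (monicQuad_pos h₁ s)) (mul_pos hα₂.1 (monicQuad_pos h₂ s))).ne'
  have hf' : f = fun s => α₁ * logRatioTerm ξ₁ η₁ ζ θ s + α₂ * logRatioTerm ξ₂ η₂ ζ θ s :=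
    funext fun s => by rw [hf]; unfold logRatioTerm; ring
  have hdf : deriv f = fun s => α₁ * deriv (logRatioTerm ξ₁ η₁ ζ θ) s
      + α₂ * deriv (logRatioTerm ξ₂ η₂ ζ θ) s := by
    rw [hf']
    exact funext fun s =>
      (((hasDerivAt_logRatioTerm (hq₁ s) (hqs s)).differentiableAt.hasDerivAt.const_mul α₁).add
        ((hasDerivAt_logRatioTerm (hq₂ s) (hqs s)).differentiableAt.hasDerivAt.const_mul α₂)).deriv
  rw [hP, (hasDerivAt_wronskian_monicQuad ξ₁ η₁ ξ₂ η₂ t).deriv,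
    (hasDerivAt_monicQuad_mul_mul ξ₁ η₁ ξ₂ η₂ ζ θ t).deriv, hdf]
  refine (((hasDerivAt_deriv_logRatioTerm hq₁ hqs t).const_mul α₁).add
    ((hasDerivAt_deriv_logRatioTerm hq₂ hqs t).const_mul α₂)).deriv.trans ?_
  exact mixture_identity hsum (hq₁ t) (hq₂ t) (hqs t) (hmix t).symm (by linear_combination -t * hsum)
end

section
/- If a family of monic-degree-fixed real polynomials with continuously varying coefficients on a connected parameter domain has nowhere-vanishing discriminant and nowhere-vanishing leading coefficient, then the number of distinct real roots is constant on the domain. -/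
open Polynomial Set Filter Topology

/-! Near a parameter `z₀`, surround each real root `α` of `G z₀` (simple, by separability) by
an interval `[α - ε, α + ε]` on which `(G z₀)'` does not vanish, the intervals being pairwise
disjoint. For `z` close to `z₀`, `(G z)'` still does not vanish on these intervals and `G z` still
changes sign at their endpoints, so each interval contains exactly one root of `G z`. There are
no other real roots: Cauchy's bound confines them to some `[-R, R]` uniformly in `z`, and `G z₀`,
hence `G z`, has no zero on the compact set left after removing the intervals from `[-R, R]`.
So the root count is locally constant, hence constant on the connected parameter space. -/

namespace Polynomial

theorem coeff_sum_fin_C_mul_X_pow {R : Type*} [Semiring R] {m : ℕ} (a : Fin m → R) (k : ℕ) :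
    (∑ i : Fin m, C (a i) * X ^ (i : ℕ)).coeff k = if h : k < m then a ⟨k, h⟩ else 0 := by
  simp only [finsetSum_coeff, coeff_C_mul_X_pow]
  split_ifs with h
  · rw [Finset.sum_eq_single ⟨k, h⟩ (fun i _ hi => if_neg fun hk => hi (Fin.ext hk.symm))
      (by simp)]
    simp
  · exact Finset.sum_eq_zero fun i _ => if_neg fun hk : k = i => h (hk ▸ i.isLt)

theorem injOn_eval_of_eval_derivative_ne_zero {p : ℝ[X]} {s : Set ℝ} (hs : s.OrdConnected)
    (h : ∀ x ∈ s, p.derivative.eval x ≠ 0) : InjOn (fun x => p.eval x) s := by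
  intro x hx y hy hxy
  by_contra hne
  wlog hlt : x < y generalizing x y
  · exact this hy hx hxy.symm (Ne.symm hne) (lt_of_le_of_ne (not_lt.1 hlt) (Ne.symm hne))
  obtain ⟨c, hc, hc0⟩ := exists_deriv_eq_zero hlt p.continuousOn hxy
  rw [Polynomial.deriv] at hc0
  exact h c (hs.out hx hy (Ioo_subset_Icc_self hc)) hc0

theorem eval_mul_eval_neg_of_injOn {p : ℝ[X]} {a b c : ℝ}
    (hinj : InjOn (fun x => p.eval x) (Icc a b)) (hc : c ∈ Ioo a b) (hroot : p.IsRoot c) :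
    p.eval a * p.eval b < 0 := by
  have hab : a ≤ b := (hc.1.trans hc.2).le
  have hcI := Ioo_subset_Icc_self hc
  rcases p.continuousOn.strictMonoOn_of_injOn_Icc' hab hinj with hmono | hanti
  · have ha := hmono (left_mem_Icc.2 hab) hcI hc.1
    have hb := hmono hcI (right_mem_Icc.2 hab) hc.2
    simp only [hroot.eq_zero] at ha hb
    exact mul_neg_of_neg_of_pos ha hb
  · have ha := hanti (left_mem_Icc.2 hab) hcI hc.1
    have hb := hanti hcI (right_mem_Icc.2 hab) hc.2
    simp only [hroot.eq_zero] at ha hb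
    exact mul_neg_of_pos_of_neg ha hb

theorem existsUnique_isRoot_mem_Icc {p : ℝ[X]} {a b : ℝ} (hab : a ≤ b)
    (hsign : p.eval a * p.eval b < 0) (hderiv : ∀ x ∈ Icc a b, p.derivative.eval x ≠ 0) :
    ∃! x, x ∈ Icc a b ∧ p.IsRoot x := by
  refine existsUnique_of_exists_of_unique ?_ fun x y ⟨hx, hx0⟩ ⟨hy, hy0⟩ =>
    injOn_eval_of_eval_derivative_ne_zero ordConnected_Icc hderiv hx hy
      (hx0.eq_zero.trans hy0.eq_zero.symm)
  rcases mul_neg_iff.1 hsign with ⟨ha, hb⟩ | ⟨ha, hb⟩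
  · obtain ⟨x, hx, hx0⟩ := intermediate_value_Icc' hab p.continuousOn ⟨hb.le, ha.le⟩
    exact ⟨x, hx, hx0⟩
  · obtain ⟨x, hx, hx0⟩ := intermediate_value_Icc hab p.continuousOn ⟨ha.le, hb.le⟩
    exact ⟨x, hx, hx0⟩

end Polynomial

theorem Finset.card_eq_of_existsUnique_mem {α β : Type*} {s : Finset α} {t : Finset β}
    {I : α → Set β} (hI : (s : Set α).PairwiseDisjoint I) (hcover : ∀ b ∈ t, ∃ a ∈ s, b ∈ I a)
    (hunique : ∀ a ∈ s, ∃! b, b ∈ t ∧ b ∈ I a) : t.card = s.card := by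
  choose i hi hbi using hcover
  refine Finset.card_bij i hi (fun b₁ hb₁ b₂ hb₂ h => ?_) fun a ha => ?_
  · exact (hunique _ (hi b₁ hb₁)).unique ⟨hb₁, hbi b₁ hb₁⟩ ⟨hb₂, h ▸ hbi b₂ hb₂⟩
  · obtain ⟨b, ⟨hb, hba⟩, -⟩ := hunique a ha
    exact ⟨b, hb, hI.elim (hi b hb) ha (Set.not_disjoint_iff.2 ⟨b, hbi b hb, hba⟩)⟩

theorem Finset.exists_pos_pairwiseDisjoint_closedBall {X : Type*} [MetricSpace X]
    (S : Finset X) {P : X → Prop} (hP : ∀ x ∈ S, ∀ᶠ y in 𝓝 x, P y) :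
    ∃ ε > 0, (S : Set X).PairwiseDisjoint (fun x => Metric.closedBall x ε) ∧
      ∀ x ∈ S, Metric.closedBall x ε ⊆ {y | P y} := by
  have hsep : ∀ x ∈ S, ∀ y ∈ S, ∀ᶠ ε in 𝓝 (0 : ℝ), x ≠ y → ε + ε < dist x y := by
    intro x _ y _
    by_cases hxy : x = y
    · exact .of_forall fun _ h => (h hxy).elim
    have : Tendsto (fun ε : ℝ => ε + ε) (𝓝 0) (𝓝 0) :=
      (continuous_id.add continuous_id).tendsto' 0 0 (by simp)
    exact (this.eventually_lt_const (dist_pos.2 hxy)).mono fun _ h _ => h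
  have hsmall : ∀ᶠ ε in 𝓝[>] (0 : ℝ), (∀ x ∈ S, ∀ y ∈ S, x ≠ y → ε + ε < dist x y) ∧
      ∀ x ∈ S, Metric.closedBall x ε ⊆ {y | P y} := by
    refine Eventually.filter_mono nhdsWithin_le_nhds ?_
    simp only [eventually_and, eventually_all_finset]
    exact ⟨hsep, fun x hx => eventually_closedBall_subset (hP x hx)⟩
  obtain ⟨ε, ⟨hsepε, hballε⟩, hε⟩ := (hsmall.and self_mem_nhdsWithin).exists
  exact ⟨ε, hε, fun x hx y hy hxy =>
    Metric.closedBall_disjoint_closedBall (hsepε x hx y hy hxy), hballε⟩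

theorem IsCompact.eventually_forall_ne {X Y : Type*} [TopologicalSpace X] [TopologicalSpace Y]
    {K : Set Y} (hK : IsCompact K) {f : X × Y → ℝ} (hf : Continuous f) {x₀ : X} {c : ℝ}
    (h : ∀ y ∈ K, f (x₀, y) ≠ c) : ∀ᶠ x in 𝓝 x₀, ∀ y ∈ K, f (x, y) ≠ c :=
  hK.eventually_forall_of_forall_eventually fun y hy => hf.continuousAt.eventually_ne (h y hy)

namespace Polynomial

variable {Z : Type*} [TopologicalSpace Z] {F : Z → ℝ[X]} {n : ℕ}

theorem continuous_eval_of_continuous_coeff (hcoeff : ∀ k, Continuous fun z => (F z).coeff k)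
    (hdeg : ∀ z, (F z).natDegree ≤ n) : Continuous fun q : Z × ℝ => (F q.1).eval q.2 := by
  simp_rw [eval_eq_sum_range' (Nat.lt_succ_of_le (hdeg _))]
  exact continuous_finsetSum _ fun k _ =>
    ((hcoeff k).comp continuous_fst).mul (continuous_snd.pow k)

theorem continuous_eval_derivative_of_continuous_coeff
    (hcoeff : ∀ k, Continuous fun z => (F z).coeff k) (hdeg : ∀ z, (F z).natDegree ≤ n) :
    Continuous fun q : Z × ℝ => (F q.1).derivative.eval q.2 := by
  refine continuous_eval_of_continuous_coeff (F := fun z => (F z).derivative) (n := n)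
    (fun k => ?_) fun z => ?_
  · simp_rw [coeff_derivative]
    exact (hcoeff (k + 1)).mul continuous_const
  · exact (natDegree_derivative_le _).trans (tsub_le_self.trans (hdeg z))

theorem exists_eventually_forall_isRoot_abs_le
    (hcoeff : ∀ k, Continuous fun z => (F z).coeff k) (hdeg : ∀ z, (F z).natDegree ≤ n)
    {z₀ : Z} (hlead : (F z₀).coeff n ≠ 0) :
    ∃ R, ∀ᶠ z in 𝓝 z₀, ∀ x, (F z).IsRoot x → |x| ≤ R := by
  -- Cauchy's bound of `F z` as long as `(F z).natDegree = n`, in a form visibly continuous in `z`.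
  set b : Z → NNReal := fun z =>
    (Finset.range n).sup (fun k => ‖(F z).coeff k‖₊) / ‖(F z).coeff n‖₊ + 1
  have hb : ContinuousAt b z₀ := by
    refine .add (.div ?_ ?_ (nnnorm_ne_zero_iff.2 hlead)) continuousAt_const
    · exact (Continuous.finset_sup_apply fun k _ => (hcoeff k).nnnorm).continuousAt
    · exact (hcoeff n).nnnorm.continuousAt
  refine ⟨b z₀ + 1, ?_⟩
  filter_upwards [(hcoeff n).continuousAt.eventually_ne hlead,
    hb.eventually (gt_mem_nhds (lt_add_one (b z₀)))] with z hlz hbz x hx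
  have hFz : F z ≠ 0 := fun h => hlz (by rw [h, coeff_zero])
  have hcauchy : cauchyBound (F z) = b z := by
    rw [cauchyBound, leadingCoeff, natDegree_eq_of_le_of_coeff_ne_zero (hdeg z) hlz]
  have hxb := hcauchy ▸ hx.norm_lt_cauchyBound hFz
  rw [← Real.norm_eq_abs, ← coe_nnnorm]
  exact_mod_cast (hxb.trans hbz).le

theorem eventually_card_roots_toFinset_eq (hcoeff : ∀ k, Continuous fun z => (F z).coeff k)
    (hdeg : ∀ z, (F z).natDegree ≤ n) {z₀ : Z} (hlead : (F z₀).coeff n ≠ 0)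
    (hsep : (F z₀).Separable) :
    ∀ᶠ z in 𝓝 z₀, (F z).roots.toFinset.card = (F z₀).roots.toFinset.card := by
  set S := (F z₀).roots.toFinset
  have hS : ∀ α, α ∈ S ↔ (F z₀).IsRoot α := by simp [S, hsep.ne_zero]
  have hcont := continuous_eval_of_continuous_coeff hcoeff hdeg
  have hcontD := continuous_eval_derivative_of_continuous_coeff hcoeff hdeg
  obtain ⟨ε, hε, hdisj, hDε⟩ := S.exists_pos_pairwiseDisjoint_closedBall
    (P := fun x => (F z₀).derivative.eval x ≠ 0) fun α hα =>
      (hcontD.comp (Continuous.prodMk_right z₀)).continuousAt.eventually_ne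
        (hsep.eval₂_derivative_ne_zero (RingHom.id ℝ) ((hS α).1 hα))
  simp only [Real.closedBall_eq_Icc] at hdisj hDε
  obtain ⟨R, hR⟩ := exists_eventually_forall_isRoot_abs_le hcoeff hdeg hlead
  set K := Icc (-R) R \ ⋃ α ∈ S, Ioo (α - ε) (α + ε)
  have hK : IsCompact K := isCompact_Icc.diff (isOpen_biUnion fun _ _ => isOpen_Ioo)
  have hK₀ : ∀ x ∈ K, (F z₀).eval x ≠ 0 := fun x hx h0 =>
    hx.2 (mem_biUnion ((hS x).2 h0) ⟨by linarith, by linarith⟩)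
  have hsign : ∀ α ∈ S, ∀ᶠ z in 𝓝 z₀, (F z).eval (α - ε) * (F z).eval (α + ε) < 0 := by
    intro α hα
    have h₀ := eval_mul_eval_neg_of_injOn
      (injOn_eval_of_eval_derivative_ne_zero ordConnected_Icc (hDε α hα))
      ⟨by linarith, by linarith⟩ ((hS α).1 hα)
    have hz : Continuous fun z => (F z).eval (α - ε) * (F z).eval (α + ε) :=
      (hcont.comp (.prodMk_left _)).mul (hcont.comp (.prodMk_left _))
    exact hz.continuousAt.eventually_lt continuousAt_const h₀
  filter_upwards [hR, hK.eventually_forall_ne hcont hK₀,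
    (eventually_all_finset S).2 fun α hα => isCompact_Icc.eventually_forall_ne hcontD (hDε α hα),
    (eventually_all_finset S).2 hsign, (hcoeff n).continuousAt.eventually_ne hlead]
    with z hRz hKz hDz hsz hlz
  have hFz : F z ≠ 0 := fun h => hlz (by rw [h, coeff_zero])
  refine Finset.card_eq_of_existsUnique_mem hdisj (fun x hx => ?_) fun α hα => ?_
  · have hx0 : (F z).IsRoot x := by simpa [hFz] using hx
    by_contra! hfar
    refine hKz x ⟨abs_le.1 (hRz x hx0), ?_⟩ hx0
    simp only [mem_iUnion]
    exact fun ⟨α, hα, hxα⟩ => hfar α hα (Ioo_subset_Icc_self hxα)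
  · simpa [hFz, and_comm] using
      existsUnique_isRoot_mem_Icc (by linarith) (hsz α hα) (hDz α hα)

end Polynomial

/-- A continuous family of real polynomials of degree exactly `n` (nonvanishing leading
coefficient) over a connected space, with nowhere-vanishing discriminant (formalized: all
complex roots simple, i.e. the polynomial mapped to `ℂ` is separable), has a constant
number of distinct real roots. -/
theorem stmt_7 {Z : Type*} [TopologicalSpace Z] [ConnectedSpace Z] (n : ℕ)
    (g : Z → Fin (n + 1) → ℝ) (hg : ∀ k, Continuous (fun z => g z k))
    (G : Z → Polynomial ℝ)
    (hG : ∀ z, G z = ∑ k : Fin (n + 1), C (g z k) * X ^ (k : ℕ))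
    (hlead : ∀ z, g z (Fin.last n) ≠ 0)
    (hdisc : ∀ z, ((G z).map (algebraMap ℝ ℂ)).Separable) :
    ∀ z w : Z, (G z).roots.toFinset.card = (G w).roots.toFinset.card := by
  have hcoeff (z : Z) (k : ℕ) : (G z).coeff k = if h : k < n + 1 then g z ⟨k, h⟩ else 0 := by
    rw [hG z, coeff_sum_fin_C_mul_X_pow]
  have hcont (k : ℕ) : Continuous fun z => (G z).coeff k := by
    simp_rw [hcoeff]
    split_ifs
    exacts [hg _, continuous_const]
  have hdeg (z : Z) : (G z).natDegree ≤ n :=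
    natDegree_le_iff_coeff_eq_zero.2 fun N hN => by rw [hcoeff, dif_neg (by omega)]
  have hlocal : IsLocallyConstant fun z => (G z).roots.toFinset.card :=
    (IsLocallyConstant.iff_eventually_eq _).2 fun z =>
      eventually_card_roots_toFinset_eq hcont hdeg
        (by rw [hcoeff, dif_pos n.lt_succ_self]; exact hlead z)
        ((separable_map (algebraMap ℝ ℂ)).1 (hdisc z))
  exact fun z w => hlocal.apply_eq_of_preconnectedSpace z w
end

section
/- For all α_1 ∈ [0,1] with α_2 = 1 − α_1 and all real ξ, the quantity Y_3 = −4 α_2^2 (3α_1^2 + 4α_1 − 8) ξ^2 + 4 α_2 (−3α_1^3 + 67α_1^2 − 196α_1 + 136) satisfies Y_3 ≥ 4 α_2 (α_2 ξ^2 + 1) ≥ 0, with equality Y_3 = 0 only if α_1 = 1. -/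
/-- For `α₁ ∈ [0,1]`, `α₂ = 1 − α₁`, `ξ ∈ ℝ`, the coefficient
`Y₃ = −4 α₂^2 (3α₁^2 + 4α₁ − 8) ξ^2 + 4 α₂ (−3α₁^3 + 67α₁^2 − 196α₁ + 136)`
satisfies `Y₃ ≥ 4 α₂ (α₂ ξ^2 + 1) ≥ 0`, with `Y₃ = 0` only if `α₁ = 1`. -/
theorem stmt_9 (α₁ α₂ ξ : ℝ) (hα₁ : α₁ ∈ Set.Icc (0 : ℝ) 1) (hα₂ : α₂ = 1 - α₁)
    (Y₃ : ℝ)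
    (hY₃ : Y₃ = -4 * α₂ ^ 2 * (3 * α₁ ^ 2 + 4 * α₁ - 8) * ξ ^ 2
        + 4 * α₂ * (-3 * α₁ ^ 3 + 67 * α₁ ^ 2 - 196 * α₁ + 136)) :
    Y₃ ≥ 4 * α₂ * (α₂ * ξ ^ 2 + 1) ∧ 4 * α₂ * (α₂ * ξ ^ 2 + 1) ≥ 0 ∧
      (Y₃ = 0 → α₁ = 1) := by
  obtain ⟨h0, h1⟩ := hα₁
  subst hα₂ hY₃
  have hξ : (0:ℝ) ≤ ξ ^ 2 := sq_nonneg ξ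
  have hA : (1 - α₁) ^ 2 * ξ ^ 2 * (7 - 4 * α₁ - 3 * α₁ ^ 2) ≥ 0 := by
    have : (7 - 4 * α₁ - 3 * α₁ ^ 2) ≥ 0 := by nlinarith [mul_nonneg (sub_nonneg.mpr h1) h0]
    positivity
  have hB : -3 * α₁ ^ 3 + 67 * α₁ ^ 2 - 196 * α₁ + 135 ≥ 3 * (1 - α₁) := by nlinarith
  refine ⟨by nlinarith, by nlinarith, ?_⟩
  intro hz
  by_contra h
  have hα : α₁ < 1 := lt_of_le_of_ne h1 h
  nlinarith [mul_pos (sub_pos.mpr hα) (sub_pos.mpr hα)]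
end

section
/- For all α_1 ∈ [0,1] with α_2 = 1 − α_1, the three quantities −13α_1^4 + 34α_1^3 − 21α_1^2 − 8α_1 + 8, −(122α_1^4 − 636α_1^3 + 914α_1^2 − 384α_1 − 16), and −(13α_1^4 − 26α_1^3 + 405α_1^2 − 392α_1 − 8) are all nonnegative, hence Y_2 = 2(−13α_1^4 + 34α_1^3 − 21α_1^2 − 8α_1 + 8)ξ^4 − 2(122α_1^4 − 636α_1^3 + 914α_1^2 − 384α_1 − 16)ξ^2 − 2(13α_1^4 − 26α_1^3 + 405α_1^2 − 392α_1 − 8) ≥ 0 for all real ξ. -/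
/-- For `α₁ ∈ [0,1]`, `α₂ = 1 − α₁`, the three quartic expressions in `Y₂` are all
nonnegative, hence `Y₂ ≥ 0` for all real `ξ`. -/
theorem stmt_13 (α₁ α₂ ξ : ℝ) (hα₁ : α₁ ∈ Set.Icc (0 : ℝ) 1) (hα₂ : α₂ = 1 - α₁) :
    0 ≤ -13 * α₁ ^ 4 + 34 * α₁ ^ 3 - 21 * α₁ ^ 2 - 8 * α₁ + 8 ∧
    0 ≤ -(122 * α₁ ^ 4 - 636 * α₁ ^ 3 + 914 * α₁ ^ 2 - 384 * α₁ - 16) ∧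
    0 ≤ -(13 * α₁ ^ 4 - 26 * α₁ ^ 3 + 405 * α₁ ^ 2 - 392 * α₁ - 8) ∧
    0 ≤ 2 * (-13 * α₁ ^ 4 + 34 * α₁ ^ 3 - 21 * α₁ ^ 2 - 8 * α₁ + 8) * ξ ^ 4
      - 2 * (122 * α₁ ^ 4 - 636 * α₁ ^ 3 + 914 * α₁ ^ 2 - 384 * α₁ - 16) * ξ ^ 2
      - 2 * (13 * α₁ ^ 4 - 26 * α₁ ^ 3 + 405 * α₁ ^ 2 - 392 * α₁ - 8) := by
  obtain ⟨h0, h1⟩ := hα₁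
  have h2 : 0 ≤ 1 - α₁ := by linarith
  have A : 0 ≤ -13 * α₁ ^ 4 + 34 * α₁ ^ 3 - 21 * α₁ ^ 2 - 8 * α₁ + 8 := by
    nlinarith [sq_nonneg α₁, sq_nonneg (1-α₁), mul_nonneg h0 h2, sq_nonneg (α₁*(1-α₁)), mul_nonneg (mul_nonneg h0 h0) h2, mul_nonneg (mul_nonneg h2 h2) h0]
  have B : 0 ≤ -(122 * α₁ ^ 4 - 636 * α₁ ^ 3 + 914 * α₁ ^ 2 - 384 * α₁ - 16) := by
    nlinarith [sq_nonneg α₁, sq_nonneg (1-α₁), mul_nonneg h0 h2, sq_nonneg (α₁*(1-α₁)), mul_nonneg (mul_nonneg h0 h0) h2, mul_nonneg (mul_nonneg h2 h2) h0]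
  have C : 0 ≤ -(13 * α₁ ^ 4 - 26 * α₁ ^ 3 + 405 * α₁ ^ 2 - 392 * α₁ - 8) := by
    nlinarith [sq_nonneg α₁, sq_nonneg (1-α₁), mul_nonneg h0 h2, sq_nonneg (α₁*(1-α₁)), mul_nonneg (mul_nonneg h0 h0) h2, mul_nonneg (mul_nonneg h2 h2) h0]
  refine ⟨A, B, C, ?_⟩
  have h4 : (0:ℝ) ≤ ξ ^ 4 := by positivity
  have h5 : (0:ℝ) ≤ ξ ^ 2 := by positivity
  nlinarith [mul_nonneg A h4, mul_nonneg B h5]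
end

section
/- For any two 2×2 positive semidefinite complex matrices ρ_1, ρ_2, there exists a unitary U such that both U ρ_1 U† and U ρ_2 U† have real entries. -/
/-!
Diagonalize `ρ₁` by a unitary `V`, so `V ρ₁ Vᴴ` is a real diagonal matrix. Conjugating further
by a diagonal unitary `diag(1, u)` leaves every diagonal matrix unchanged, and turns the entry
`b` of the Hermitian matrix `V ρ₂ Vᴴ` at `(0, 1)` into `b * conj u`; for `u = exp (i arg b)`
this is `‖b‖`. A `2 × 2` Hermitian matrix with a real `(0, 1)` entry is real.
-/

open Matrix ComplexOrder

namespace Matrix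

section DiagonalUnitary

variable {n α : Type*} [Fintype n] [DecidableEq n] [CommRing α] [StarRing α]

theorem diagonal_mem_unitaryGroup_iff {d : n → α} :
    diagonal d ∈ unitaryGroup n α ↔ ∀ i, star (d i) * d i = 1 := by
  rw [mem_unitaryGroup_iff', star_eq_conjTranspose, diagonal_conjTranspose,
    diagonal_mul_diagonal, ← diagonal_one, diagonal_eq_diagonal_iff]
  rfl

theorem diagonal_mul_mul_conjTranspose_diagonal_of_mem_unitaryGroup {d : n → α}
    (hd : diagonal d ∈ unitaryGroup n α) (e : n → α) :
    diagonal d * diagonal e * (diagonal d)ᴴ = diagonal e := by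
  rw [(commute_diagonal d e).eq, Matrix.mul_assoc, ← star_eq_conjTranspose,
    mem_unitaryGroup_iff.mp hd, Matrix.mul_one]

end DiagonalUnitary

theorem IsHermitian.exists_unitary_mul_mul_conjTranspose_eq_diagonal {n 𝕜 : Type*} [Fintype n]
    [DecidableEq n] [RCLike 𝕜] {A : Matrix n n 𝕜} (hA : A.IsHermitian) :
    ∃ U ∈ unitaryGroup n 𝕜, U * A * Uᴴ = diagonal (RCLike.ofReal ∘ hA.eigenvalues) := by
  refine ⟨star (hA.eigenvectorUnitary : Matrix n n 𝕜),
    Unitary.star_mem hA.eigenvectorUnitary.2, ?_⟩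
  simpa [star_eq_conjTranspose] using hA.conjStarAlgAut_star_eigenvectorUnitary

theorem exists_diagonal_unitary_im_conj_apply_zero_one_eq_zero
    (M : Matrix (Fin 2) (Fin 2) ℂ) :
    ∃ d : Fin 2 → ℂ, diagonal d ∈ unitaryGroup (Fin 2) ℂ ∧
      ((diagonal d * M * (diagonal d)ᴴ) 0 1).im = 0 := by
  set u := Complex.exp (Complex.arg (M 0 1) * Complex.I)
  have hu : star u * u = 1 := by
    change (starRingEnd ℂ) u * u = 1
    rw [Complex.conj_mul', Complex.norm_exp_ofReal_mul_I]
    simp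
  have hphase : M 0 1 * star u = ‖M 0 1‖ := by
    rw [← Complex.norm_mul_exp_arg_mul_I (M 0 1), mul_assoc, mul_comm u, hu, mul_one]
    simp
  refine ⟨![1, u], diagonal_mem_unitaryGroup_iff.mpr (Fin.forall_fin_two.mpr ⟨by simp, hu⟩), ?_⟩
  rw [diagonal_conjTranspose, mul_diagonal, diagonal_mul]
  simp only [cons_val_zero, cons_val_one, Pi.star_apply, one_mul]
  rw [hphase, Complex.ofReal_im]

theorem IsHermitian.im_apply_eq_zero_of_im_apply_zero_one {M : Matrix (Fin 2) (Fin 2) ℂ}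
    (hM : M.IsHermitian) (h01 : (M 0 1).im = 0) (i j : Fin 2) : (M i j).im = 0 := by
  have hdiag (i : Fin 2) : (M i i).im = 0 := Complex.conj_eq_iff_im.mp (hM.apply i i)
  have h10 : M 1 0 = star (M 0 1) := (hM.apply 1 0).symm
  fin_cases i <;> fin_cases j
  · exact hdiag 0
  · exact h01
  · simp [h10, h01]
  · exact hdiag 1

end Matrix

/-- For any two `2 × 2` positive semidefinite complex matrices `ρ₁, ρ₂`, there is a unitary
`U` such that both `U ρ₁ U†` and `U ρ₂ U†` have real entries. -/
theorem stmt_19 (ρ₁ ρ₂ : Matrix (Fin 2) (Fin 2) ℂ)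
    (h₁ : ρ₁.PosSemidef) (h₂ : ρ₂.PosSemidef) :
    ∃ U ∈ Matrix.unitaryGroup (Fin 2) ℂ,
      (∀ i j, ((U * ρ₁ * Uᴴ) i j).im = 0) ∧
      (∀ i j, ((U * ρ₂ * Uᴴ) i j).im = 0) := by
  obtain ⟨V, hV, hVρ₁⟩ := h₁.1.exists_unitary_mul_mul_conjTranspose_eq_diagonal
  obtain ⟨d, hd, hd01⟩ := exists_diagonal_unitary_im_conj_apply_zero_one_eq_zero (V * ρ₂ * Vᴴ)
  have conj_mul (ρ : Matrix (Fin 2) (Fin 2) ℂ) :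
      diagonal d * V * ρ * (diagonal d * V)ᴴ = diagonal d * (V * ρ * Vᴴ) * (diagonal d)ᴴ := by
    simp only [conjTranspose_mul, Matrix.mul_assoc]
  refine ⟨diagonal d * V, mul_mem hd hV, fun i j => ?_, ?_⟩
  · rw [conj_mul, hVρ₁, diagonal_mul_mul_conjTranspose_diagonal_of_mem_unitaryGroup hd]
    simp [diagonal_apply, apply_ite]
  · refine IsHermitian.im_apply_eq_zero_of_im_apply_zero_one ?_ (conj_mul ρ₂ ▸ hd01)
    exact isHermitian_mul_mul_conjTranspose _ h₂.1
end
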